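/- Let d : B → C, p : C → D with pd = coker(g) for g : B' → B and h = ker(p) : C' → C. Then the square with top row [d h] : B ⊕ C' → C, right morphism p, bottom row pd : B → D, left morphism the projection B ⊕ C' → B, is a pullback square; consequently if pd is a semi-stable cokernel then [d h] : B ⊕ C' → C is a cokernel, and p = coker(h). -/

import Mathlib

open CategoryTheory CategoryTheory.Limits ZeroObject

universe v u

variable {𝒞 : Type u} [Category.{v} 𝒞] [Preadditive 𝒞] [HasZeroObject 𝒞] [HasBinaryBiproducts 𝒞]

/-- `d` is a cokernel of some morphism. -/
def IsCokernelOfSome {B X : 𝒞} (d : B ⟶ X) : Prop :=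
  ∃ (A : 𝒞) (f : A ⟶ B) (w : f ≫ d = 0), Nonempty (IsColimit (CokernelCofork.ofπ d w))

/-- `i` is a kernel of some morphism. -/
def IsKernelOfSome {A B : 𝒞} (i : A ⟶ B) : Prop :=
  ∃ (X : 𝒞) (f : B ⟶ X) (w : i ≫ f = 0), Nonempty (IsLimit (KernelFork.ofι i w))

/-- A semi-stable cokernel: a cokernel whose pullback along every morphism exists
and is again a cokernel. -/
def IsSemiStableCokernel {B X : 𝒞} (d : B ⟶ X) : Prop :=
  IsCokernelOfSome d ∧ ∀ (C' : 𝒞) (h : C' ⟶ X), ∃ (B' : 𝒞) (g : B' ⟶ B) (d' : B' ⟶ C'),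
    IsPullback g d' d h ∧ IsCokernelOfSome d'

/-- A semi-stable kernel: a kernel whose pushout along every morphism exists
and is again a kernel. -/
def IsSemiStableKernel {A B : 𝒞} (i : A ⟶ B) : Prop :=
  IsKernelOfSome i ∧ ∀ (A' : 𝒞) (h : A ⟶ A'), ∃ (P : 𝒞) (g : B ⟶ P) (i' : A' ⟶ P),
    IsPushout i h g i' ∧ IsKernelOfSome i'

/-!
Given `s : S ⟶ B` and `t : S ⟶ X` with `s ≫ d ≫ p = t ≫ p`, the difference `t - s ≫ d` is killed
by `p`, hence factors through its kernel `h`; this gives the map into `B ⊞ C'`. If `d ≫ p` is a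
semi-stable cokernel, `[d h]` is a pullback of it and so a cokernel, in particular epi. Then a map
`φ` with `h ≫ φ = 0` is determined on `B` by `d ≫ φ`, which kills `g` because `g ≫ d` factors
through `h`; so `d ≫ φ` descends along `d ≫ p`, and the two components of `[d h]` show that the
descended map is the factorisation of `φ` through `p`.
-/

section

variable {𝒜 : Type*} [Category 𝒜] [Preadditive 𝒜]

theorem isPullback_biprod_fst_desc [HasBinaryBiproducts 𝒜] {B X D C' : 𝒜} (d : B ⟶ X)
    (p : X ⟶ D) (h : C' ⟶ X) (wh : h ≫ p = 0) (hker : IsLimit (KernelFork.ofι h wh)) :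
    IsPullback (biprod.fst : B ⊞ C' ⟶ B) (biprod.desc d h) (d ≫ p) p := by
  have : Mono h := mono_of_isLimit_fork hker
  let lift (s : PullbackCone (d ≫ p) p) : {l // l ≫ h = s.snd - s.fst ≫ d} :=
    KernelFork.IsLimit.lift' hker _ (by simp [Preadditive.sub_comp, ← s.condition])
  refine IsPullback.of_isLimit' ⟨by apply biprod.hom_ext' <;> simp [wh]⟩
    (PullbackCone.IsLimit.mk _ (fun s => biprod.lift s.fst (lift s).1) (fun s => by simp)
      (fun s => by simp [(lift s).2]) fun s m hfst hsnd => ?_)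
  apply biprod.hom_ext
  · simpa using hfst
  · rw [← cancel_mono h]
    simp [(lift s).2, ← hsnd, ← hfst, biprod.desc_eq]

theorem IsCokernelOfSome.of_iso_comp {B'' B X : 𝒜} (e : B'' ≅ B) {d : B ⟶ X}
    (hd : IsCokernelOfSome (e.hom ≫ d)) : IsCokernelOfSome d := by
  obtain ⟨A, f, w, ⟨hf⟩⟩ := hd
  exact ⟨A, f ≫ e.hom, by simpa using w,
    ⟨IsCokernel.ofIso _ hf _ (Iso.refl A) e (Iso.refl X) (by simp) (by simp)⟩⟩

theorem IsCokernelOfSome.epi {B X : 𝒜} {d : B ⟶ X} (hd : IsCokernelOfSome d) : Epi d := by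
  obtain ⟨_, _, _, ⟨hf⟩⟩ := hd
  exact epi_of_isColimit_cofork hf

theorem IsSemiStableCokernel.isCokernelOfSome_of_isPullback {B X C P : 𝒜} {q : B ⟶ X}
    (hq : IsSemiStableCokernel q) {k : C ⟶ X} {fst : P ⟶ B} {snd : P ⟶ C}
    (hpb : IsPullback fst snd q k) : IsCokernelOfSome snd := by
  obtain ⟨_, _, _, hpb', hd'⟩ := hq.2 C k
  exact .of_iso_comp (hpb'.isoIsPullback _ _ hpb) (by rwa [IsPullback.isoIsPullback_hom_snd])

def isColimitCokernelCoforkOfEpiBiprodDesc [HasBinaryBiproducts 𝒜] {B X D C' B' : 𝒜}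
    (d : B ⟶ X) (p : X ⟶ D) (h : C' ⟶ X) (wh : h ≫ p = 0) (hker : IsLimit (KernelFork.ofι h wh))
    (g : B' ⟶ B) (wg : g ≫ d ≫ p = 0) (hcok : IsColimit (CokernelCofork.ofπ (d ≫ p) wg))
    [Epi (biprod.desc d h)] : IsColimit (CokernelCofork.ofπ p wh) :=
  have : Epi (d ≫ p) := epi_of_isColimit_cofork hcok
  have : Epi p := epi_of_epi d p
  CokernelCofork.IsColimit.ofπ' _ _ fun {_} φ hφ =>
    let u := KernelFork.IsLimit.lift' hker (g ≫ d) (by simpa using wg)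
    let ψ := CokernelCofork.IsColimit.desc' hcok (d ≫ φ) (by simp [← reassoc_of% u.2, hφ])
    ⟨ψ.1, by
      rw [← cancel_epi (biprod.desc d h)]
      apply biprod.hom_ext'
      · simpa using ψ.2
      · simp [reassoc_of% wh, hφ]⟩

end

theorem stmt14 {B X D C' B' : 𝒞} (d : B ⟶ X) (p : X ⟶ D)
    (h : C' ⟶ X) (wh : h ≫ p = 0) (hker : IsLimit (KernelFork.ofι h wh))
    (g : B' ⟶ B) (wg : g ≫ (d ≫ p) = 0)
    (hcok : IsColimit (CokernelCofork.ofπ (d ≫ p) wg)) :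
    IsPullback (biprod.fst : B ⊞ C' ⟶ B) (biprod.desc d h) (d ≫ p) p ∧
      (IsSemiStableCokernel (d ≫ p) →
        IsCokernelOfSome (biprod.desc d h) ∧
          Nonempty (IsColimit (CokernelCofork.ofπ p wh))) := by
  have hpb := isPullback_biprod_fst_desc d p h wh hker
  refine ⟨hpb, fun hss => ?_⟩
  have hdesc : IsCokernelOfSome (biprod.desc d h) := hss.isCokernelOfSome_of_isPullback hpb
  have : Epi (biprod.desc d h) := hdesc.epi
  exact ⟨hdesc, ⟨isColimitCokernelCoforkOfEpiBiprodDesc d p h wh hker g wg hcok⟩⟩
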